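/- Let V = e^{-i(π/4) H_x} e^{-i(π/4) H} where H = Σ_{j=1}^n Z_j Z_{j+1} (periodic, n ≥ 5) and H_x = Σ_j X_j. Then for 0 ≤ l ≤ n−4, conjugation of the Pauli string Z_k X_{k+1}⋯X_{k+l} Z_{k+l+1} by V grows the string: V† (Z_k X_{k+1}⋯X_{k+l} Z_{k+l+1}) V = Z_{k−1} X_k X_{k+1}⋯X_{k+l+1} Z_{k+l+2} (indices mod n). -/

import Mathlib

open Matrix Complex

noncomputable section

/-- States of an `n`-qubit system, as amplitudes over computational basis strings. -/
abbrev QState (n : ℕ) := (Fin n → Fin 2) → ℂ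

/-- Operators on an `n`-qubit system. -/
abbrev QOp (n : ℕ) := Matrix (Fin n → Fin 2) (Fin n → Fin 2) ℂ

def PX : Matrix (Fin 2) (Fin 2) ℂ := !![0, 1; 1, 0]
def PY : Matrix (Fin 2) (Fin 2) ℂ := !![0, -Complex.I; Complex.I, 0]
def PZ : Matrix (Fin 2) (Fin 2) ℂ := !![1, 0; 0, -1]

/-- Tensor product of single-qubit operators. -/
def kron {n : ℕ} (f : Fin n → Matrix (Fin 2) (Fin 2) ℂ) : QOp n :=
  fun i k => ∏ l, f l (i l) (k l)

/-- Single-qubit operator `A` acting on qubit `j` of an `n`-qubit system. -/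
def op1 {n : ℕ} (A : Matrix (Fin 2) (Fin 2) ℂ) (j : Fin n) : QOp n :=
  kron (fun l => if l = j then A else 1)

def Zop {n : ℕ} (j : Fin n) : QOp n := op1 PZ j
def Xop {n : ℕ} (j : Fin n) : QOp n := op1 PX j
def Yop {n : ℕ} (j : Fin n) : QOp n := op1 PY j

/-- The ring-of-disagrees (MAX-CUT on the `n`-cycle) Hamiltonian. -/
def ringH (n : ℕ) [NeZero n] : QOp n := ∑ j : Fin n, Zop j * Zop (j + 1)

/-- The standard one-body mixer Hamiltonian. -/
def mixerH (n : ℕ) : QOp n := ∑ j : Fin n, Xop j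

/-- The state `|+⟩^{⊗ n}`. -/
def plusState (n : ℕ) : QState n := fun _ => ((1 / Real.sqrt 2) ^ n : ℝ)

/-- The expectation value `⟨ψ|A|ψ⟩`. -/
def expect {n : ℕ} (A : QOp n) (ψ : QState n) : ℂ :=
  ∑ i, ∑ k, (starRingEnd ℂ) (ψ i) * A i k * ψ k

/-- A single QAOA layer `e^{-iβ H_x} e^{-iγ H}`. -/
def qaoaLayer {n : ℕ} (H : QOp n) (γ β : ℝ) : QOp n :=
  NormedSpace.exp ((-(β : ℂ) * Complex.I) • mixerH n) *
    NormedSpace.exp ((-(γ : ℂ) * Complex.I) • H)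

/-- The depth-`p` QAOA ansatz state, layer `k = 0` acting first. -/
def qaoaState {n : ℕ} (H : QOp n) (p : ℕ) (γ β : Fin p → ℝ) : QState n :=
  ((List.ofFn (fun k : Fin p => qaoaLayer H (γ k) (β k))).reverse.prod).mulVec (plusState n)

/-- The QAOA layer `V` with both angles `π/4`. -/
def Vop (n : ℕ) [NeZero n] : QOp n := qaoaLayer (ringH n) (Real.pi / 4) (Real.pi / 4)

open Fin.NatCast in
/-- The Pauli string `Z_k X_{k+1} ⋯ X_{k+l} Z_{k+l+1}` (indices mod `n`). -/
def ZXXZ (n : ℕ) [NeZero n] (k : Fin n) (l : ℕ) : QOp n :=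
  Zop k * (List.ofFn (fun t : Fin l => Xop (k + (((t : ℕ) + 1 : ℕ) : Fin n)))).prod *
    Zop (k + ((l + 1 : ℕ) : Fin n))

open Fin.NatCast in
/-- The Pauli string `Y_k X_{k+1} ⋯ X_{k+l} Y_{k+l+1}` (indices mod `n`). -/
def YXXY (n : ℕ) [NeZero n] (k : Fin n) (l : ℕ) : QOp n :=
  Yop k * (List.ofFn (fun t : Fin l => Xop (k + (((t : ℕ) + 1 : ℕ) : Fin n)))).prod *
    Yop (k + ((l + 1 : ℕ) : Fin n))

/-!
Every term `T` of `H_x` and of `H` is a Pauli string, hence an involution, so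
`e^{-iπT/2} = -iT`. If `T` anticommutes with a Pauli string `S` then `e^{iπT/4} S = S e^{-iπT/4}`,
and if it commutes with `S` it drops out of the conjugation. Since the terms of each Hamiltonian
commute with one another, `e^{iπ/4 ∑ T} S e^{-iπ/4 ∑ T}` is `S` times the product of the `-iT`
over the terms that anticommute with `S`. For `Z_k X⋯X Z_{k+l+1}` these are the two mixer terms
at its ends, which turn it into `Y_k X⋯X Y_{k+l+1}`; for that string they are the two bonds
leaving its support, which turn it into `Z_{k-1} X⋯X Z_{k+l+2}`. The bound `l ≤ n - 4` keeps the
grown string from closing up around the ring.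
-/

open Fin.NatCast Fin.CommRing

-- the coefficient of both Hamiltonians in the exponents of `Vop n`
local notation "θ" => (-((Real.pi / 4 : ℝ) : ℂ) * I)

local notation "M₂" => Matrix (Fin 2) (Fin 2) ℂ

theorem mul_mul_eq_smul_of_eq_smul {α : Type*} [Semiring α] [Algebra ℂ α] {a b s : α}
    {x y : ℂ} (ha : a * s = x • (s * a)) (hb : b * s = y • (s * b)) :
    a * b * s = (x * y) • (s * (a * b)) := by
  rw [mul_assoc, hb, mul_smul_comm, ← mul_assoc, ha, smul_mul_assoc, smul_smul, mul_assoc,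
    mul_comm x y]

section Exponential

variable {𝔸 : Type*} [NormedRing 𝔸] [NormedAlgebra ℂ 𝔸]

theorem exp_smul_of_mul_self_eq_one {A : 𝔸} (hA : A * A = 1) (z : ℂ) :
    NormedSpace.exp (z • A) = Complex.cosh z • 1 + Complex.sinh z • A := by
  rw [NormedSpace.exp_eq_tsum ℂ]
  refine HasSum.tsum_eq (HasSum.even_add_odd ?_ ?_)
  · convert (Complex.hasSum_cosh z).smul_const (1 : 𝔸) using 2 with m
    rw [smul_pow, pow_mul A, sq, hA, one_pow, smul_smul, div_eq_inv_mul]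
  · convert (Complex.hasSum_sinh z).smul_const A using 2 with m
    rw [smul_pow, pow_succ A, pow_mul A, sq, hA, one_pow, one_mul, smul_smul, div_eq_inv_mul]

variable [NormedAlgebra ℚ 𝔸] [CompleteSpace 𝔸]

theorem exp_pi_div_four_smul_mul_self {A : 𝔸} (hA : A * A = 1) :
    NormedSpace.exp (θ • A) * NormedSpace.exp (θ • A) = -I • A := by
  rw [← NormedSpace.exp_add_of_commute (Commute.refl _), ← add_smul,
    exp_smul_of_mul_self_eq_one hA,
    show θ + θ = ((-(Real.pi / 2) : ℝ) : ℂ) * I by push_cast; ring,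
    Complex.cosh_mul_I, Complex.sinh_mul_I, ← Complex.ofReal_cos, ← Complex.ofReal_sin,
    Real.cos_neg, Real.sin_neg, Real.cos_pi_div_two, Real.sin_pi_div_two]
  simp

theorem exp_conj_of_anticommute_of_commute {A B R S : 𝔸} (hAB : Commute A B) (hAR : Commute A R)
    (hBR : Commute B R) (hA : A * A = 1) (hB : B * B = 1) (hSA : A * S = -(S * A))
    (hSB : B * S = -(S * B)) (hSR : Commute R S) :
    NormedSpace.exp (-(θ • (A + B + R))) * S * NormedSpace.exp (θ • (A + B + R)) =
      -(S * A * B) := by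
  have hABR : Commute (θ • (A + B)) (θ • R) := ((hAR.add_left hBR).smul_left θ).smul_right θ
  have hanti : SemiconjBy S (θ • (A + B)) (-(θ • (A + B))) := by
    rw [SemiconjBy, mul_smul_comm, mul_add, ← neg_neg (S * A), ← neg_neg (S * B), ← hSA,
      ← hSB]
    simp only [neg_mul, add_mul, smul_add, smul_neg, neg_add, smul_mul_assoc]
  have hcomm : SemiconjBy S (θ • R) (θ • R) := (hSR.smul_left θ).symm
  have hexpAB : Commute (NormedSpace.exp (θ • A)) (NormedSpace.exp (θ • B)) :=
    ((hAB.smul_left θ).smul_right θ).exp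
  rw [smul_add, neg_add, NormedSpace.exp_add_of_commute hABR.neg_left.neg_right,
    add_comm (θ • (A + B)), NormedSpace.exp_add_of_commute hABR.symm]
  calc _ = NormedSpace.exp (-(θ • (A + B))) *
        (NormedSpace.exp (-(θ • R)) * S * NormedSpace.exp (θ • R)) *
          NormedSpace.exp (θ • (A + B)) := by simp only [mul_assoc]
    _ = S * (NormedSpace.exp (θ • (A + B)) * NormedSpace.exp (θ • (A + B))) := by
        rw [hcomm.exp_neg_mul_mul_exp_eq_self, ← hanti.exp_right.eq, mul_assoc]
    _ = -(S * A * B) := by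
        rw [smul_add, NormedSpace.exp_add_of_commute ((hAB.smul_left θ).smul_right θ),
          hexpAB.symm.mul_mul_mul_comm, exp_pi_div_four_smul_mul_self hA,
          exp_pi_div_four_smul_mul_self hB]
        simp [mul_assoc, smul_smul]

end Exponential

theorem conj_exp_sum_of_two_anticommute {m ι : Type*} [Fintype m] [DecidableEq m] [Fintype ι]
    [DecidableEq ι] (T : ι → Matrix m m ℂ) (S : Matrix m m ℂ) {a b : ι} (hab : a ≠ b)
    (hT : ∀ i j, Commute (T i) (T j)) (ha : T a * T a = 1) (hb : T b * T b = 1)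
    (hSa : T a * S = -(S * T a)) (hSb : T b * S = -(S * T b))
    (hS : ∀ i, i ≠ a → i ≠ b → Commute (T i) S) :
    NormedSpace.exp (-(θ • ∑ i, T i)) * S * NormedSpace.exp (θ • ∑ i, T i) =
      -(S * T a * T b) := by
  -- any algebra norm inducing the entrywise topology will do: `NormedSpace.exp` only sees that
  let := Matrix.linftyOpNormedRing (n := m) (α := ℂ)
  let := Matrix.linftyOpNormedAlgebra (n := m) (R := ℂ) (α := ℂ)
  let := Matrix.linftyOpNormedAlgebra (n := m) (R := ℚ) (α := ℂ)
  have hb' : b ∈ Finset.univ.erase a := Finset.mem_erase.2 ⟨hab.symm, Finset.mem_univ b⟩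
  rw [← Finset.add_sum_erase _ _ (Finset.mem_univ a), ← Finset.add_sum_erase _ _ hb',
    ← add_assoc]
  refine exp_conj_of_anticommute_of_commute (hT a b) (Commute.sum_right _ _ _ fun i _ => hT a i)
    (Commute.sum_right _ _ _ fun i _ => hT b i) ha hb hSa hSb
    (Commute.sum_left _ _ _ fun i hi => ?_)
  obtain ⟨hib, hi⟩ := Finset.mem_erase.1 hi
  exact hS i (Finset.ne_of_mem_erase hi) hib

theorem PX_mul_self : PX * PX = 1 := by
  ext i j; fin_cases i <;> fin_cases j <;> simp [PX]

theorem PZ_mul_self : PZ * PZ = 1 := by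
  ext i j; fin_cases i <;> fin_cases j <;> simp [PZ]

theorem PZ_mul_PX : PZ * PX = I • PY := by
  ext i j; fin_cases i <;> fin_cases j <;> simp [PX, PY, PZ]

theorem PX_mul_PZ : PX * PZ = -I • PY := by
  ext i j; fin_cases i <;> fin_cases j <;> simp [PX, PY, PZ]

theorem PY_mul_PZ : PY * PZ = I • PX := by
  ext i j; fin_cases i <;> fin_cases j <;> simp [PX, PY, PZ]

theorem PZ_mul_PY : PZ * PY = -I • PX := by
  ext i j; fin_cases i <;> fin_cases j <;> simp [PX, PY, PZ]

theorem conjTranspose_PX : PXᴴ = PX := by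
  ext i j; fin_cases i <;> fin_cases j <;> simp [PX]

theorem conjTranspose_PZ : PZᴴ = PZ := by
  ext i j; fin_cases i <;> fin_cases j <;> simp [PZ]

section Kron

variable {n : ℕ}

theorem kron_mul_kron (f g : Fin n → M₂) : kron f * kron g = kron (f * g) := by
  ext i k
  simp only [kron, Matrix.mul_apply, Pi.mul_apply, Finset.prod_univ_sum, Finset.prod_mul_distrib,
    Fintype.piFinset_univ]

theorem kron_one : kron (1 : Fin n → M₂) = 1 := by
  ext i k
  by_cases h : i = k
  · subst h; simp [kron]
  · obtain ⟨l, hl⟩ := Function.ne_iff.mp h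
    rw [Matrix.one_apply_ne h]
    exact Finset.prod_eq_zero (Finset.mem_univ l) (Matrix.one_apply_ne hl)

theorem kron_update_smul (f : Fin n → M₂) (j : Fin n) (a : ℂ) (A : M₂) :
    kron (Function.update f j (a • A)) = a • kron (Function.update f j A) := by
  ext i k
  simp only [kron, Matrix.smul_apply, smul_eq_mul]
  have hrest (B : M₂) : ∏ l ∈ Finset.univ.erase j, Function.update f j B l (i l) (k l) =
      ∏ l ∈ Finset.univ.erase j, f l (i l) (k l) :=
    Finset.prod_congr rfl fun l hl => by rw [Function.update_of_ne (Finset.ne_of_mem_erase hl)]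
  rw [← Finset.mul_prod_erase _ _ (Finset.mem_univ j),
    ← Finset.mul_prod_erase _ _ (Finset.mem_univ j), hrest, hrest, Function.update_self,
    Function.update_self, Matrix.smul_apply, smul_eq_mul, mul_assoc]

theorem conjTranspose_kron (f : Fin n → M₂) : (kron f)ᴴ = kron fun l => (f l)ᴴ := by
  ext i k
  simp only [Matrix.conjTranspose_apply, kron, star_prod]

theorem op1_eq_kron_update (A : M₂) (j : Fin n) :
    op1 A j = kron (Function.update (1 : Fin n → M₂) j A) := by
  unfold op1
  congr 1
  ext1 l
  by_cases hl : l = j <;> simp [hl]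

theorem op1_mul_kron_eq_smul {A : M₂} {j : Fin n} {f : Fin n → M₂} {x : ℂ}
    (h : A * f j = x • (f j * A)) : op1 A j * kron f = x • (kron f * op1 A j) := by
  have hl : Function.update (1 : Fin n → M₂) j A * f = Function.update f j (A * f j) := by
    ext1 l; by_cases hl : l = j <;> simp [hl]
  have hr : f * Function.update (1 : Fin n → M₂) j A = Function.update f j (f j * A) := by
    ext1 l; by_cases hl : l = j <;> simp [hl]
  rw [op1_eq_kron_update, kron_mul_kron, kron_mul_kron, hl, hr, h, kron_update_smul]

end Kron

section Offsets

variable {n : ℕ} [NeZero n]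

theorem val_add_natCast_sub {k c : Fin n} {m : ℕ} (h : (k - c).val + m < n) :
    (k + (m : Fin n) - c).val = (k - c).val + m := by
  rw [show k + (m : Fin n) - c = (k - c) + m by ring, Fin.val_add, Fin.val_natCast,
    Nat.mod_eq_of_lt (by omega : m < n), Nat.mod_eq_of_lt h]

theorem val_add_natCast_sub_self {c : Fin n} {m : ℕ} (hm : m < n) :
    (c + (m : Fin n) - c).val = m := by
  rw [add_sub_cancel_left, Fin.val_natCast, Nat.mod_eq_of_lt hm]

theorem val_add_one_sub (j c : Fin n) : (j + 1 - c).val = ((j - c).val + 1) % n := by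
  rw [show j + 1 - c = (j - c) + 1 by ring, Fin.val_add, Fin.val_one', Nat.add_mod_mod]

theorem val_sub_ne_of_ne {s c : Fin n} {m : ℕ} (hm : m < n) (h : s ≠ c + m) :
    (s - c).val ≠ m := by
  rintro rfl
  exact h (by rw [Fin.cast_val_eq_self]; ring)

theorem mod_succ_mem_Icc_iff {a b m n : ℕ} (ha : 0 < a) (hb : b + 1 < n) (hm : m < n)
    (hma : m + 1 ≠ a) (hmb : m ≠ b) :
    (a ≤ (m + 1) % n ∧ (m + 1) % n ≤ b) ↔ (a ≤ m ∧ m ≤ b) := by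
  rcases Nat.lt_or_ge (m + 1) n with hlt | hge
  · rw [Nat.mod_eq_of_lt hlt]; omega
  · rw [show m + 1 = n by omega, Nat.mod_self]; omega

end Offsets

section Anchored

variable {n : ℕ}

def kronAt (c : Fin n) (p : ℕ → M₂) : QOp n := kron fun s => p (s - c).val

theorem kronAt_mul_kronAt (c : Fin n) (p q : ℕ → M₂) :
    kronAt c p * kronAt c q = kronAt c (p * q) :=
  kron_mul_kron _ _

theorem op1_mul_kronAt_eq_smul {A : M₂} {j c : Fin n} {p : ℕ → M₂} {x : ℂ}
    (h : A * p (j - c).val = x • (p (j - c).val * A)) :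
    op1 A j * kronAt c p = x • (kronAt c p * op1 A j) :=
  op1_mul_kron_eq_smul h

variable [NeZero n]

theorem op1_eq_kronAt (c : Fin n) (A : M₂) (j : Fin n) :
    op1 A j = kronAt c fun m => if m = (j - c).val then A else 1 := by
  unfold op1 kronAt
  congr 1
  ext1 s
  simp only [Fin.val_inj, sub_left_inj]

theorem kronAt_smul (c : Fin n) (w : ℕ → ℂ) (p : ℕ → M₂) :
    kronAt c (fun m => w m • p m) = (∏ m ∈ Finset.range n, w m) • kronAt c p := by
  ext i k
  simp only [kronAt, kron, Matrix.smul_apply, smul_eq_mul, Finset.prod_mul_distrib]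
  congr 1
  rw [← Fin.prod_univ_eq_prod_range]
  exact Fintype.prod_equiv (Equiv.subRight c) _ _ fun _ => rfl

theorem kronAt_eq_neg_of_phases (c : Fin n) {p q : ℕ → M₂} {d e : ℕ} (hd : d < n)
    (he : e < n) (h : ∀ m, p m = ((if m = d then I else 1) * (if m = e then I else 1)) • q m) :
    kronAt c p = -kronAt c q := by
  rw [funext h, kronAt_smul, Finset.prod_mul_distrib, Finset.prod_ite_eq' (Finset.range n),
    Finset.prod_ite_eq', if_pos (Finset.mem_range.2 hd), if_pos (Finset.mem_range.2 he),
    I_mul_I, neg_one_smul]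

end Anchored

def xChain (P Q : M₂) (d l m : ℕ) : M₂ :=
  if m = d then P else if m = d + l + 1 then Q else if d < m ∧ m ≤ d + l then PX else 1

section Strings

variable {n : ℕ} [NeZero n]

theorem prod_ofFn_Xop_eq_kronAt (c k : Fin n) (l : ℕ) (h : (k - c).val + l < n) :
    (List.ofFn (fun t : Fin l => Xop (k + (((t : ℕ) + 1 : ℕ) : Fin n)))).prod =
      kronAt c fun m => if (k - c).val < m ∧ m ≤ (k - c).val + l then PX else 1 := by
  induction l with
  | zero =>
    rw [List.ofFn_zero, List.prod_nil, ← kron_one]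
    unfold kronAt
    congr 1
    ext1 s
    simp only [Pi.one_apply]
    rw [if_neg (by omega)]
  | succ l ih =>
    rw [List.ofFn_succ', List.prod_concat]
    simp only [Fin.val_castSucc, Fin.val_last]
    rw [ih (by omega), Xop, op1_eq_kronAt c, val_add_natCast_sub h, kronAt_mul_kronAt]
    congr 1
    ext1 m
    simp only [Pi.mul_apply]
    split_ifs <;> first | omega | simp

theorem ZXXZ_eq_kronAt (c k : Fin n) (l : ℕ) (h : (k - c).val + l + 1 < n) :
    ZXXZ n k l = kronAt c (xChain PZ PZ (k - c).val l) := by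
  rw [ZXXZ, prod_ofFn_Xop_eq_kronAt c k l (by omega), Zop, Zop, op1_eq_kronAt c, op1_eq_kronAt c,
    val_add_natCast_sub h, kronAt_mul_kronAt, kronAt_mul_kronAt]
  congr 1
  ext1 m
  simp only [xChain, Pi.mul_apply]
  split_ifs <;> first | omega | simp

end Strings

theorem PX_mul_xChain (d l m : ℕ) :
    PX * xChain PZ PZ d l m =
      (if m = d ∨ m = d + l + 1 then (-1 : ℂ) else 1) • (xChain PZ PZ d l m * PX) := by
  unfold xChain
  split_ifs <;> first | omega | simp [PX_mul_PZ, PZ_mul_PX]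

theorem PZ_mul_xChain (d l m : ℕ) :
    PZ * xChain PY PY d l m =
      (if d ≤ m ∧ m ≤ d + l + 1 then (-1 : ℂ) else 1) • (xChain PY PY d l m * PZ) := by
  unfold xChain
  split_ifs <;> first | omega | simp [PX_mul_PZ, PZ_mul_PX, PY_mul_PZ, PZ_mul_PY]

section Operators

variable {n : ℕ}

theorem op1_commute_op1 {A B : M₂} (h : Commute A B) (i j : Fin n) :
    Commute (op1 A i) (op1 B j) := by
  have key := op1_mul_kron_eq_smul (j := i) (f := Function.update 1 j B) (x := 1) (A := A)
    (by by_cases hij : i = j <;> simp [hij, h.eq])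
  rwa [one_smul, ← op1_eq_kron_update] at key

theorem op1_mul_self {A : M₂} (hA : A * A = 1) (j : Fin n) : op1 A j * op1 A j = 1 := by
  rw [op1_eq_kron_update, kron_mul_kron, ← kron_one]
  congr 1
  ext1 l
  by_cases hl : l = j <;> simp [hl, hA]

theorem conjTranspose_op1 (A : M₂) (j : Fin n) : (op1 A j)ᴴ = op1 Aᴴ j := by
  rw [op1_eq_kron_update, conjTranspose_kron, op1_eq_kron_update]
  congr 1
  ext1 l
  by_cases hl : l = j <;> simp [hl]

theorem Xop_commute (i j : Fin n) : Commute (Xop i) (Xop j) :=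
  op1_commute_op1 (Commute.refl PX) i j

theorem Zop_commute (i j : Fin n) : Commute (Zop i) (Zop j) :=
  op1_commute_op1 (Commute.refl PZ) i j

theorem Xop_mul_self (j : Fin n) : Xop j * Xop j = 1 :=
  op1_mul_self PX_mul_self j

theorem Zop_mul_self (j : Fin n) : Zop j * Zop j = 1 :=
  op1_mul_self PZ_mul_self j

theorem conjTranspose_mixerH : (mixerH n)ᴴ = mixerH n := by
  simp only [mixerH, Matrix.conjTranspose_sum, Xop, conjTranspose_op1, conjTranspose_PX]

theorem conjTranspose_ringH [NeZero n] : (ringH n)ᴴ = ringH n := by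
  simp only [ringH, Matrix.conjTranspose_sum, Matrix.conjTranspose_mul, Zop, conjTranspose_op1,
    conjTranspose_PZ]
  exact Finset.sum_congr rfl fun j _ => (Zop_commute (j + 1) j).eq

theorem conjTranspose_Vop_mul_mul [NeZero n] (S : QOp n) :
    (Vop n)ᴴ * S * Vop n =
      NormedSpace.exp (-(θ • ringH n)) *
        (NormedSpace.exp (-(θ • mixerH n)) * S * NormedSpace.exp (θ • mixerH n)) *
          NormedSpace.exp (θ • ringH n) := by
  have hθ : star θ = -θ := by
    rw [Complex.star_def, map_mul, map_neg, Complex.conj_ofReal, Complex.conj_I]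
    ring
  have hskew (H : QOp n) (hH : Hᴴ = H) :
      (NormedSpace.exp (θ • H))ᴴ = NormedSpace.exp (-(θ • H)) := by
    rw [← Matrix.exp_conjTranspose, Matrix.conjTranspose_smul, hH, hθ, neg_smul]
  rw [Vop, qaoaLayer, Matrix.conjTranspose_mul, hskew _ conjTranspose_ringH,
    hskew _ conjTranspose_mixerH]
  simp only [mul_assoc]

end Operators

section Layer

variable {n : ℕ} [NeZero n]

theorem conj_exp_mixerH_xChain (c : Fin n) (d l : ℕ) (h : d + l + 1 < n) :
    NormedSpace.exp (-(θ • mixerH n)) * kronAt c (xChain PZ PZ d l) *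
      NormedSpace.exp (θ • mixerH n) = kronAt c (xChain PY PY d l) := by
  have hd := val_add_natCast_sub_self (c := c) (m := d) (by omega)
  have he := val_add_natCast_sub_self (c := c) (m := d + l + 1) h
  have hsign (j : Fin n) : Xop j * kronAt c (xChain PZ PZ d l) =
      (if (j - c).val = d ∨ (j - c).val = d + l + 1 then (-1 : ℂ) else 1) •
        (kronAt c (xChain PZ PZ d l) * Xop j) :=
    op1_mul_kronAt_eq_smul (PX_mul_xChain d l _)
  have hde : c + (d : Fin n) ≠ c + ((d + l + 1 : ℕ) : Fin n) := fun hde => by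
    rw [hde, he] at hd; omega
  rw [mixerH, conj_exp_sum_of_two_anticommute Xop _ hde Xop_commute (Xop_mul_self _)
    (Xop_mul_self _) ?_ ?_ ?_]
  · rw [Xop, Xop, op1_eq_kronAt c, op1_eq_kronAt c, hd, he, kronAt_mul_kronAt, kronAt_mul_kronAt,
      kronAt_eq_neg_of_phases c (d := d) (e := d + l + 1) (by omega) h, neg_neg]
    intro m
    simp only [xChain, Pi.mul_apply]
    split_ifs <;> first | omega | simp [PZ_mul_PX]
  · rw [hsign, hd, if_pos (Or.inl rfl), neg_one_smul]
  · rw [hsign, he, if_pos (Or.inr rfl), neg_one_smul]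
  · intro j hjd hje
    rw [Commute, SemiconjBy, hsign, if_neg, one_smul]
    exact not_or.2 ⟨val_sub_ne_of_ne (by omega) hjd, val_sub_ne_of_ne h hje⟩

theorem conj_exp_ringH_xChain (c : Fin n) (l : ℕ) (h : l + 3 < n) :
    NormedSpace.exp (-(θ • ringH n)) * kronAt c (xChain PY PY 1 l) *
      NormedSpace.exp (θ • ringH n) = kronAt c (xChain PZ PZ 0 (l + 2)) := by
  set ε : ℕ → ℂ := fun m => if 1 ≤ m ∧ m ≤ 1 + l + 1 then -1 else 1 with hε
  have hsign (j : Fin n) : Zop j * kronAt c (xChain PY PY 1 l) =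
      ε (j - c).val • (kronAt c (xChain PY PY 1 l) * Zop j) :=
    op1_mul_kronAt_eq_smul (PZ_mul_xChain 1 l _)
  have hedge (j : Fin n) : Zop j * Zop (j + 1) * kronAt c (xChain PY PY 1 l) =
      (ε (j - c).val * ε (((j - c).val + 1) % n)) •
        (kronAt c (xChain PY PY 1 l) * (Zop j * Zop (j + 1))) := by
    rw [← val_add_one_sub]
    exact mul_mul_eq_smul_of_eq_smul (hsign j) (hsign (j + 1))
  have hsq (j : Fin n) : Zop j * Zop (j + 1) * (Zop j * Zop (j + 1)) = 1 := by
    rw [(Zop_commute _ _).mul_mul_mul_comm, Zop_mul_self, Zop_mul_self, mul_one]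
  have h0 : (c - c).val = 0 := by rw [sub_self, Fin.val_zero]
  have hb := val_add_natCast_sub_self (c := c) (m := l + 2) (by omega)
  have hcb : c ≠ c + ((l + 2 : ℕ) : Fin n) := fun hcb => by rw [← hcb, h0] at hb; omega
  rw [ringH, conj_exp_sum_of_two_anticommute (fun j => Zop j * Zop (j + 1)) _ hcb
    (fun i j => ((Zop_commute _ _).mul_left (Zop_commute _ _)).mul_right
      ((Zop_commute _ _).mul_left (Zop_commute _ _)))
    ?_ ?_ ?_ ?_ ?_]
  · have h1 : (0 + 1) % n = 1 := Nat.mod_eq_of_lt (by omega)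
    have h3 : (l + 2 + 1) % n = l + 3 := Nat.mod_eq_of_lt (by omega)
    simp only [Zop, op1_eq_kronAt c, val_add_one_sub, h0, hb, h1, h3, kronAt_mul_kronAt]
    rw [kronAt_eq_neg_of_phases c (d := 1) (e := l + 2) (by omega) (by omega), neg_neg]
    intro m
    simp only [xChain, Pi.mul_apply]
    split_ifs <;> first | omega | simp [PY_mul_PZ]
  · exact hsq c
  · exact hsq _
  · rw [hedge, h0, show ε 0 * ε ((0 + 1) % n) = -1 by
      simp [hε, Nat.mod_eq_of_lt (show 1 < n by omega)], neg_one_smul]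
  · rw [hedge, hb, Nat.mod_eq_of_lt (show l + 2 + 1 < n by omega),
      show ε (l + 2) * ε (l + 2 + 1) = -1 by
        simp only [hε]; rw [if_pos (by omega), if_neg (by omega)]; norm_num,
      neg_one_smul]
  · intro j hjc hjb
    have hm0 : (j - c).val ≠ 0 := by rwa [Ne, Fin.val_eq_zero_iff, sub_eq_zero]
    have hmb := val_sub_ne_of_ne (show l + 2 < n by omega) hjb
    rw [Commute, SemiconjBy, hedge, show ε _ * ε _ = 1 from ?_, one_smul]
    simp only [hε]
    simp only [mod_succ_mem_Icc_iff (a := 1) (b := 1 + l + 1) one_pos (by omega) (j - c).isLt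
      (by omega) (by omega)]
    split_ifs <;> norm_num

end Layer

/-- growth rule for `ZX⋯XZ` strings under conjugation by the QAOA layer `V`
at angles `β = γ = π/4`, for `0 ≤ l ≤ n - 4`, `n ≥ 5`. -/
theorem stmt6 (n : ℕ) [NeZero n] (hn : 5 ≤ n) (k : Fin n) (l : ℕ) (hl : l ≤ n - 4) :
    (Vop n)ᴴ * ZXXZ n k l * Vop n = ZXXZ n (k - 1) (l + 2) := by
  have hk : (k - (k - 1)).val = 1 := by
    rw [sub_sub_cancel, Fin.val_one', Nat.mod_eq_of_lt (by omega)]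
  have hk' : (k - 1 - (k - 1)).val = 0 := by rw [sub_self, Fin.val_zero]
  rw [ZXXZ_eq_kronAt (k - 1) k l (by omega), hk, conjTranspose_Vop_mul_mul,
    conj_exp_mixerH_xChain _ _ _ (by omega), conj_exp_ringH_xChain _ _ (by omega),
    ZXXZ_eq_kronAt (k - 1) (k - 1) (l + 2) (by omega), hk']
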